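/- arXiv:1801.02745 — 2 statements merged into one kernel-verified Lean document; each statement's English description precedes it below -/
import Mathlib

section
/- For every q ∈ (0,1) and every real x ≥ 0, D_KL(Poi_x ‖ Y^(q)) ≤ log S(q) − x·log q. -/
/-!
For `N ~ Poi(x)`, writing out the logarithms gives
`D_KL(Poi_x ‖ Y^(q)) = log S(q) - x log q + x log x - E[g(N)]`, and size biasing
(`n Poi_x(n) = x Poi_x(n - 1)`) turns `E[g(N)]` into `x (E[H_N] - γ)`. So everything reduces to
`E[H_N] ≥ γ + log x`.

Averaging `H_n = ∫₀ˣ (1 - (1 - u/x)ⁿ) / u du` against the Poisson weights gives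
`E[H_N] = ∫₀ˣ (1 - e⁻ᵘ) / u du`, so `E[H_N] - log x` is antitone in `x`. On the other hand
`H_n ≥ γ + log (n + 1) - 1/(n + 1)` yields `E[H_N] ≥ γ + log x - 1/x`. Comparing `x` with larger
and larger means gives the claim.
-/

/-- `ψ(y) = −γ + Σ_{k=1}^{y−1} 1/k` for a positive integer `y`. -/
noncomputable def psi (y : ℕ) : ℝ :=
  -Real.eulerMascheroniConstant + ∑ k ∈ Finset.Icc 1 (y - 1), (1 : ℝ) / k

/-- `g(0) = 0` and `g(y) = y·ψ(y)` for `y ≥ 1`. -/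
noncomputable def g (y : ℕ) : ℝ := y * psi y

/-- The normalizing sum `S(q) = Σ_{y=0}^∞ e^{g(y)}·(q/e)^y / y!` of the digamma distribution. -/
noncomputable def S (q : ℝ) : ℝ :=
  ∑' y : ℕ, Real.exp (g y) * (q / Real.exp 1) ^ y / Nat.factorial y

/-- The pmf of the digamma distribution: `Y^(q)(y) = e^{g(y)}·(q/e)^y / (y!·S(q))`. -/
noncomputable def digammaPMF (q : ℝ) (y : ℕ) : ℝ :=
  Real.exp (g y) * (q / Real.exp 1) ^ y / (Nat.factorial y * S q)

/-- The pmf of the Poisson distribution with mean `l`. -/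
noncomputable def poissonPMF (l : ℝ) (y : ℕ) : ℝ := Real.exp (-l) * l ^ y / Nat.factorial y

/-- Kullback–Leibler divergence between distributions on ℕ:
`D_KL(P‖Q) = Σ_y P(y)·log(P(y)/Q(y))`. -/
noncomputable def klDivPMF (P Q : ℕ → ℝ) : ℝ := ∑' y : ℕ, P y * Real.log (P y / Q y)

/-- The exponential integral `E₁(x) = ∫_1^∞ e^{−xt}/t dt`. -/
noncomputable def E1 (x : ℝ) : ℝ := ∫ t in Set.Ioi (1 : ℝ), Real.exp (-(x * t)) / t

open Real Finset
open scoped Nat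

local notation "γ" => Real.eulerMascheroniConstant

section Poisson

variable {x : ℝ}

lemma poissonPMF_nonneg (hx : 0 ≤ x) (n : ℕ) : 0 ≤ poissonPMF x n := by
  unfold poissonPMF
  positivity

lemma poissonPMF_succ (x : ℝ) (n : ℕ) :
    poissonPMF x (n + 1) = x / (n + 1) * poissonPMF x n := by
  simp only [poissonPMF, Nat.factorial_succ, Nat.cast_mul, pow_succ]
  field_simp
  push_cast
  ring

lemma hasSum_poissonPMF_mul_pow (x r : ℝ) :
    HasSum (fun n => poissonPMF x n * r ^ n) (exp (x * (r - 1))) := by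
  have h := (NormedSpace.expSeries_div_hasSum_exp (x * r)).mul_left (exp (-x))
  rw [← Real.exp_eq_exp_ℝ, ← Real.exp_add, show -x + x * r = x * (r - 1) by ring] at h
  exact h.congr_fun fun n => by simp only [poissonPMF, mul_pow]; ring

lemma hasSum_poissonPMF (x : ℝ) : HasSum (poissonPMF x) 1 := by
  simpa using hasSum_poissonPMF_mul_pow x 1

lemma HasSum.poissonPMF_mul_natCast_mul {f : ℕ → ℝ} {a : ℝ}
    (h : HasSum (fun n => poissonPMF x n * f n) a) :
    HasSum (fun n => poissonPMF x n * (n * f (n - 1))) (x * a) := by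
  rw [← hasSum_nat_add_iff' 1]
  simp only [Finset.range_one, Finset.sum_singleton, Nat.cast_zero, zero_mul, mul_zero, sub_zero]
  refine (h.mul_left x).congr_fun fun n => ?_
  rw [poissonPMF_succ, Nat.add_sub_cancel]
  push_cast
  field_simp

lemma hasSum_poissonPMF_mul_natCast (x : ℝ) :
    HasSum (fun n => poissonPMF x n * n) x := by
  simpa using ((hasSum_poissonPMF x).mul_right 1).poissonPMF_mul_natCast_mul

end Poisson

section Harmonic

variable {x : ℝ}

lemma harmonic_le_one_add_natCast (n : ℕ) : (harmonic n : ℝ) ≤ 1 + n :=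
  (harmonic_le_one_add_log n).trans (by linarith [Real.log_le_self (Nat.cast_nonneg (α := ℝ) n)])

lemma harmonic_nonneg (n : ℕ) : (0 : ℝ) ≤ harmonic n :=
  (log_nonneg (by simp)).trans (log_add_one_le_harmonic n)

lemma summable_poissonPMF_mul_harmonic (hx : 0 ≤ x) :
    Summable (fun n => poissonPMF x n * harmonic n) := by
  refine Summable.of_nonneg_of_le
    (fun n => mul_nonneg (poissonPMF_nonneg hx n) (harmonic_nonneg n)) (fun n => ?_)
    ((hasSum_poissonPMF x).add (hasSum_poissonPMF_mul_natCast x)).summable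
  rw [← mul_one_add]
  exact mul_le_mul_of_nonneg_left (harmonic_le_one_add_natCast n) (poissonPMF_nonneg hx n)

lemma add_log_add_one_sub_div_le_harmonic {y : ℝ} (hy : 0 < y) (n : ℕ) :
    γ + log y + 1 - (y + 1) / (n + 1) ≤ harmonic n := by
  have hn : (0 : ℝ) < n + 1 := by positivity
  have hγ := eulerMascheroniConstant_lt_eulerMascheroniSeq' (n + 1)
  rw [eulerMascheroniSeq', if_neg n.succ_ne_zero, harmonic_succ] at hγ
  have hlog := one_sub_inv_le_log_of_pos (div_pos hn hy)
  rw [log_div hn.ne' hy.ne', inv_div] at hlog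
  push_cast at hγ
  have : (y + 1) / (n + 1) = y / (n + 1) + (n + 1 : ℝ)⁻¹ := by field_simp
  linarith

lemma add_log_sub_inv_le_tsum_poissonPMF_mul_harmonic {y : ℝ} (hy : 0 < y) :
    γ + log y - y⁻¹ ≤ ∑' n, poissonPMF y n * harmonic n := by
  set c := γ + log y + 1
  have hrecip : HasSum (fun n => poissonPMF y n * ((y + 1) / (n + 1)))
      ((y + 1) / y * (1 - exp (-y))) := by
    have h := ((hasSum_nat_add_iff' 1).mpr (hasSum_poissonPMF y)).mul_left ((y + 1) / y)
    rw [Finset.sum_range_one, poissonPMF, pow_zero, Nat.factorial_zero, Nat.cast_one, mul_one,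
      div_one] at h
    refine h.congr_fun fun n => ?_
    rw [poissonPMF_succ]
    field_simp
  have hlow := ((hasSum_poissonPMF y).mul_right c).sub hrecip
  calc γ + log y - y⁻¹ ≤ 1 * c - (y + 1) / y * (1 - exp (-y)) := by
        have : (y + 1) / y * (1 - exp (-y)) ≤ (y + 1) / y := by
          have := exp_pos (-y)
          exact mul_le_of_le_one_right (by positivity) (by linarith)
        have : (y + 1) / y = 1 + y⁻¹ := by field_simp
        linarith
    _ ≤ ∑' n, poissonPMF y n * harmonic n := by
        refine hasSum_le (fun n => ?_) hlow (summable_poissonPMF_mul_harmonic hy.le).hasSum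
        rw [← mul_sub]
        exact mul_le_mul_of_nonneg_left (add_log_add_one_sub_div_le_harmonic hy n)
          (poissonPMF_nonneg hy.le n)

end Harmonic

section IntegralRepresentation

open MeasureTheory

variable {x : ℝ}

lemma one_sub_exp_neg_div_mem_Icc {u : ℝ} (hu : 0 < u) : (1 - exp (-u)) / u ∈ Set.Icc 0 1 := by
  have := one_sub_le_exp_neg u
  have := exp_le_one_iff.mpr (neg_nonpos.mpr hu.le)
  exact ⟨div_nonneg (by linarith) hu.le, (div_le_one hu).mpr (by linarith)⟩

lemma intervalIntegrable_one_sub_exp_neg_div {a b : ℝ} (ha : 0 ≤ a) (hb : 0 ≤ b) :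
    IntervalIntegrable (fun u => (1 - exp (-u)) / u) volume a b := by
  refine (intervalIntegrable_const (c := (1 : ℝ))).mono_fun'
    (by fun_prop : Measurable fun u : ℝ => (1 - exp (-u)) / u).aestronglyMeasurable
    (ae_restrict_of_forall_mem measurableSet_uIoc fun u hu => ?_)
  obtain ⟨h0, h1⟩ := one_sub_exp_neg_div_mem_Icc ((le_min ha hb).trans_lt hu.1)
  exact (norm_of_nonneg h0).trans_le h1

lemma antitoneOn_integral_one_sub_exp_neg_div_sub_log :
    AntitoneOn (fun x => (∫ u in 0..x, (1 - exp (-u)) / u) - log x) (Set.Ioi 0) := by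
  intro a (ha : 0 < a) b (hb : 0 < b) hab
  have hφ : ∫ u in a..b, (1 - exp (-u)) / u ≤ ∫ u in a..b, u⁻¹ := by
    refine intervalIntegral.integral_mono_on hab
      (intervalIntegrable_one_sub_exp_neg_div ha.le hb.le)
      (intervalIntegral.intervalIntegrable_inv (fun u hu => ?_) continuousOn_id) fun u hu => ?_
    · exact (ha.trans_le (Set.uIcc_of_le hab ▸ hu).1).ne'
    · have hu0 := ha.trans_le hu.1
      rw [div_le_iff₀ hu0, inv_mul_cancel₀ hu0.ne']
      linarith [exp_pos (-u)]
  rw [integral_inv_of_pos ha hb, log_div hb.ne' ha.ne'] at hφ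
  simp only [← intervalIntegral.integral_add_adjacent_intervals
    (intervalIntegrable_one_sub_exp_neg_div le_rfl ha.le)
    (intervalIntegrable_one_sub_exp_neg_div ha.le hb.le)]
  linarith

-- The integrand is `(1 - (1 - u / x) ^ n) / u`, written as a polynomial in `u` so that it is
-- continuous at `u = 0`.
lemma integral_inv_mul_geom_sum (hx : 0 < x) (n : ℕ) :
    ∫ u in 0..x, x⁻¹ * ∑ k ∈ range n, (1 - u / x) ^ k = harmonic n := by
  have hpow (k : ℕ) : ∫ u in 0..x, (1 - u / x) ^ k = x / (k + 1) := by
    rw [intervalIntegral.integral_comp_sub_div (· ^ k) hx.ne', div_self hx.ne', zero_div,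
      sub_self, sub_zero, integral_pow]
    simp [div_eq_mul_inv]
  have hint (k : ℕ) : IntervalIntegrable (fun u => (1 - u / x) ^ k) volume 0 x :=
    (by fun_prop : Continuous fun u => (1 - u / x) ^ k).intervalIntegrable _ _
  rw [intervalIntegral.integral_const_mul, intervalIntegral.integral_finsetSum fun k _ => hint k,
    harmonic]
  push_cast
  rw [mul_sum]
  refine sum_congr rfl fun k _ => ?_
  rw [hpow]
  field_simp

lemma hasSum_poissonPMF_mul_inv_mul_geom_sum (hx : 0 < x) {u : ℝ} (hu : u ≠ 0) :
    HasSum (fun n => poissonPMF x n * (x⁻¹ * ∑ k ∈ range n, (1 - u / x) ^ k))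
      ((1 - exp (-u)) / u) := by
  have h := ((hasSum_poissonPMF x).sub (hasSum_poissonPMF_mul_pow x (1 - u / x))).div_const u
  rw [show x * (1 - u / x - 1) = -u by field_simp; ring] at h
  refine h.congr_fun fun n => ?_
  rw [eq_div_iff hu]
  linear_combination -poissonPMF x n * geom_sum_mul (1 - u / x) n

lemma tsum_poissonPMF_mul_harmonic_eq_integral (hx : 0 < x) :
    ∑' n, poissonPMF x n * harmonic n = ∫ u in 0..x, (1 - exp (-u)) / u := by
  set F : ℕ → ℝ → ℝ := fun n u => poissonPMF x n * (x⁻¹ * ∑ k ∈ range n, (1 - u / x) ^ k)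
  have hF_int (n : ℕ) : ∫ u in 0..x, F n u = poissonPMF x n * harmonic n := by
    rw [intervalIntegral.integral_const_mul, integral_inv_mul_geom_sum hx]
  have hF_nonneg (n : ℕ) {u : ℝ} (hu : u ∈ Set.Ioc 0 x) : 0 ≤ F n u := by
    have : 0 ≤ 1 - u / x := by rw [sub_nonneg, div_le_one hx]; exact hu.2
    have := poissonPMF_nonneg hx.le n
    positivity
  simp only [intervalIntegral.integral_of_le hx.le] at hF_int ⊢
  have hsum := hasSum_integral_of_summable_integral_norm (μ := volume.restrict (Set.Ioc 0 x))
    (F := F) (fun n => Continuous.integrableOn_Ioc (by fun_prop)) ?_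
  · rw [(hsum.congr_fun fun n => (hF_int n).symm).tsum_eq]
    exact setIntegral_congr_fun measurableSet_Ioc fun u hu =>
      (hasSum_poissonPMF_mul_inv_mul_geom_sum hx hu.1.ne').tsum_eq
  · refine (summable_poissonPMF_mul_harmonic hx.le).congr fun n => ?_
    rw [← hF_int]
    exact setIntegral_congr_fun measurableSet_Ioc fun u hu =>
      (norm_of_nonneg (hF_nonneg n hu)).symm

end IntegralRepresentation

lemma add_log_le_tsum_poissonPMF_mul_harmonic {x : ℝ} (hx : 0 < x) :
    γ + log x ≤ ∑' n, poissonPMF x n * harmonic n := by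
  refine le_of_forall_pos_le_add fun ε hε => ?_
  set y := max x ε⁻¹
  have hy : 0 < y := hx.trans_le (le_max_left _ _)
  have hanti : ∑' n, poissonPMF y n * harmonic n - log y
      ≤ ∑' n, poissonPMF x n * harmonic n - log x := by
    simpa only [tsum_poissonPMF_mul_harmonic_eq_integral hx,
      tsum_poissonPMF_mul_harmonic_eq_integral hy]
      using antitoneOn_integral_one_sub_exp_neg_div_sub_log hx hy (le_max_left _ _)
  have hlow := add_log_sub_inv_le_tsum_poissonPMF_mul_harmonic hy
  have hyε : y⁻¹ ≤ ε := inv_le_of_inv_le₀ hε (le_max_right _ _)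
  linarith

section Digamma

variable {q : ℝ}

lemma g_eq_mul_harmonic (y : ℕ) : g y = y * (harmonic (y - 1) - γ) := by
  rw [g, psi, harmonic_eq_sum_Icc]
  push_cast
  simp only [one_div]
  ring

lemma exp_g_le_pow_self (y : ℕ) : exp (g y) ≤ (y : ℝ) ^ y := by
  rcases Nat.eq_zero_or_pos y with rfl | hy
  · simp [g_eq_mul_harmonic]
  have hy' : (0 : ℝ) < y := by exact_mod_cast hy
  have hγ := eulerMascheroniSeq_lt_eulerMascheroniConstant (y - 1)
  rw [eulerMascheroniSeq, Nat.cast_pred hy, sub_add_cancel] at hγ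
  calc exp (g y) ≤ exp (y * log y) := by
        rw [g_eq_mul_harmonic]
        gcongr
        linarith
    _ = (y : ℝ) ^ y := by rw [exp_nat_mul, exp_log hy']

lemma summable_S_term (hq0 : 0 ≤ q) (hq1 : q < 1) :
    Summable (fun y : ℕ => exp (g y) * (q / exp 1) ^ y / y !) := by
  refine Summable.of_nonneg_of_le (fun y => by positivity) (fun y => ?_)
    (summable_geometric_of_lt_one hq0 hq1)
  have hfac : (0 : ℝ) < y ! := by positivity
  rw [div_pow, ← exp_nat_mul, mul_one, div_le_iff₀ hfac]
  calc exp (g y) * (q ^ y / exp y) ≤ y ^ y * (q ^ y / exp y) := by gcongr; exact exp_g_le_pow_self y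
    _ ≤ (exp y * y !) * (q ^ y / exp y) := by
        gcongr
        exact (div_le_iff₀ hfac).mp (pow_div_factorial_le_exp _ (Nat.cast_nonneg y) y)
    _ = q ^ y * y ! := by field_simp

lemma S_pos (hq0 : 0 ≤ q) (hq1 : q < 1) : 0 < S q := by
  refine zero_lt_one.trans_le ?_
  have h := (summable_S_term hq0 hq1).le_tsum 0 fun y _ => by positivity
  rw [← S] at h
  simpa [g_eq_mul_harmonic] using h

end Digamma

section KL

variable {q x : ℝ}

lemma poissonPMF_mul_log_div_digammaPMF (hq : 0 < q) (hS : 0 < S q) (y : ℕ) :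
    poissonPMF x y * log (poissonPMF x y / digammaPMF q y)
      = poissonPMF x y * (log (S q) - x + y * (log x - log q + 1) - g y) := by
  by_cases hP : poissonPMF x y = 0
  · simp [hP]
  have hfac : (y ! : ℝ) ≠ 0 := by positivity
  have hxy : x ^ y ≠ 0 := by
    rintro h
    simp [poissonPMF, h] at hP
  have hQ : digammaPMF q y ≠ 0 := by
    unfold digammaPMF
    positivity
  congr 1
  rw [log_div hP hQ, poissonPMF, digammaPMF, log_div (by positivity) hfac,
    log_div (by positivity) (by positivity), log_mul (by positivity) hxy,
    log_mul (by positivity) (by positivity), log_mul hfac hS.ne', log_pow, log_pow,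
    log_div hq.ne' (by positivity), log_exp, log_exp, log_exp]
  ring

lemma klDivPMF_poissonPMF_digammaPMF (hq : 0 < q) (hS : 0 < S q) (hx : 0 ≤ x) :
    klDivPMF (poissonPMF x) (digammaPMF q)
      = log (S q) - x * log q + x * log x - x * (∑' n, poissonPMF x n * harmonic n - γ) := by
  have hg : HasSum (fun y => poissonPMF x y * g y)
      (x * (∑' n, poissonPMF x n * harmonic n - γ)) := by
    have h : HasSum (fun n => poissonPMF x n * ((harmonic n : ℝ) - γ))
        (∑' n, poissonPMF x n * harmonic n - γ) := by
      simpa only [mul_sub, one_mul] using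
        (summable_poissonPMF_mul_harmonic hx).hasSum.sub ((hasSum_poissonPMF x).mul_right γ)
    exact h.poissonPMF_mul_natCast_mul.congr_fun fun y => by rw [g_eq_mul_harmonic]
  have h := ((((hasSum_poissonPMF x).mul_left (log (S q) - x)).add
    ((hasSum_poissonPMF_mul_natCast x).mul_left (log x - log q + 1))).sub hg)
  rw [klDivPMF, tsum_congr (poissonPMF_mul_log_div_digammaPMF hq hS)]
  convert h.tsum_eq using 1
  · exact tsum_congr fun y => by ring
  · ring

end KL

/-- For every `q ∈ (0,1)` and every `x ≥ 0`,
`D_KL(Poi_x ‖ Y^(q)) ≤ log S(q) − x·log q`. -/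
theorem stmt2 (q x : ℝ) (hq : q ∈ Set.Ioo (0 : ℝ) 1) (hx : 0 ≤ x) :
    klDivPMF (poissonPMF x) (digammaPMF q)
      ≤ Real.log (S q) - x * Real.log q := by
  obtain ⟨hq0, hq1⟩ := hq
  rw [klDivPMF_poissonPMF_digammaPMF hq0 (S_pos hq0.le hq1) hx]
  have hH : x * log x ≤ x * (∑' n, poissonPMF x n * harmonic n - γ) := by
    rcases hx.eq_or_lt with rfl | hx0
    · simp
    · exact mul_le_mul_of_nonneg_left
        (by linarith [add_log_le_tsum_poissonPMF_mul_harmonic hx0]) hx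
  linarith
end

section
/- For every integer y ≥ 1 and every q ∈ (0,1), (2/e^{1+γ})·NB_{1/2,q}(y) ≤ √(1−q)·e^{g(y)}·(q/e)^y / y! ≤ (1/√(2e))·NB_{1/2,q}(y). -/
/-- The pmf of the negative binomial distribution with `1/2` failures and success
probability `q`: `NB_{1/2,q}(y) = (Γ(y+1/2)/(Γ(1/2)·y!))·q^y·√(1−q)`. -/
noncomputable def NB (q : ℝ) (y : ℕ) : ℝ :=
  Real.Gamma (y + 1 / 2) / (Real.Gamma (1 / 2) * Nat.factorial y) * q ^ y * Real.sqrt (1 - q)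

/-!
Dividing the middle term by `NB_{1/2,q}(y)` leaves `T(y) = e^{g(y)-y} √π / Γ(y+1/2)`
(`nbRatio`), which does not depend on `q`. Since `g(y+1) - g(y) = 1 + H_y - γ`, the quotient
`T(y+1)/T(y) = e^{H_y-γ}/(y+1/2)` is at least `1` because `H_y ≥ γ + log(y+1/2)`, so `T`
increases from `T(1) = 2/e^{1+γ}`. In terms of the Stirling sequence
`s(n) = n!/(√(2n)(n/e)^n)` one has `T(y) = e^{g(y)}/(√2 y^y) · s(y)/s(2y)`, and
`H_y ≤ γ + log y + 1/(2y)` gives `e^{g(y)} ≤ y^y/√e`; as `s(y)/s(2y) → 1`, the increasing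
sequence `T` stays below `1/√(2e)`.

The two bounds on `H_n` hold because `H_n - log(n+1/2)` decreases and `H_n - log n - 1/(2n)`
increases to `γ`, by the midpoint and trapezoid estimates for `log(1+1/a) = ∫_a^{a+1} dx/x`.
-/

open Real Filter Topology
open scoped Nat

theorem inv_add_half_le_log_one_add_inv {a : ℝ} (ha : 0 < a) :
    (a + 1 / 2)⁻¹ ≤ log (1 + a⁻¹) := by
  refine le_trans (le_of_eq ?_) (le_hasSum (hasSum_log_one_add_inv ha) 0 fun k _ => by positivity)
  norm_num
  field_simp

theorem log_one_add_inv_le {a : ℝ} (ha : 0 < a) :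
    log (1 + a⁻¹) ≤ (a⁻¹ + (a + 1)⁻¹) / 2 := by
  set u := 1 / (2 * a + 1) with hu
  have hu2 : 1 - u ^ 2 = 4 * a * (a + 1) / (2 * a + 1) ^ 2 := by
    rw [hu]
    field_simp
    ring
  have hu1 : u ^ 2 < 1 := by
    have : 0 < 4 * a * (a + 1) / (2 * a + 1) ^ 2 := by positivity
    linarith
  have hgeom := (hasSum_geometric_of_lt_one (sq_nonneg u) hu1).mul_left (2 * u)
  refine (hasSum_le (fun k => ?_) (hasSum_log_one_add_inv ha) hgeom).trans_eq ?_
  · have hk : 1 / (2 * (k : ℝ) + 1) ≤ 1 := by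
      rw [div_le_one (by positivity)]
      linarith [k.cast_nonneg (α := ℝ)]
    rw [pow_succ, pow_mul]
    have : 0 ≤ 2 * u * (u ^ 2) ^ k := by positivity
    nlinarith
  · rw [hu2, hu]
    field_simp
    ring

theorem log_add_half_add_eulerMascheroniConstant_le_harmonic (n : ℕ) :
    log (n + 1 / 2) + eulerMascheroniConstant ≤ harmonic n := by
  have hanti : Antitone fun n : ℕ => (harmonic n : ℝ) - log (n + 1 / 2) := by
    refine antitone_nat_of_succ_le fun m => ?_
    have hm : (0 : ℝ) < m + 1 / 2 := by positivity
    have hlog :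
        log ((m + 1 : ℕ) + 1 / 2) = log (m + 1 / 2) + log (1 + ((m : ℝ) + 1 / 2)⁻¹) := by
      rw [← log_mul hm.ne' (by positivity)]
      congr 1
      field_simp
      push_cast
      ring
    have h : ((m + 1 : ℕ) : ℝ)⁻¹ ≤ log (1 + ((m : ℝ) + 1 / 2)⁻¹) := by
      convert inv_add_half_le_log_one_add_inv hm using 2
      push_cast
      ring
    simp only [harmonic_succ, Rat.cast_add, Rat.cast_inv, Rat.cast_natCast, hlog]
    linarith
  have hle : ∀ m ≥ n, (harmonic m : ℝ) - log (m + 1) ≤ harmonic n - log (n + 1 / 2) :=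
    fun m hm => by
      have h := hanti hm
      have : log (m + 1 / 2) ≤ log (m + 1) := log_le_log (by positivity) (by linarith)
      dsimp only at h
      linarith
  linarith [le_of_tendsto tendsto_harmonic_sub_log_add_one (eventually_atTop.2 ⟨n, hle⟩)]

theorem harmonic_le_log_add_eulerMascheroniConstant_add_one_div_two_mul (n : ℕ) :
    harmonic n ≤ log n + eulerMascheroniConstant + 1 / (2 * n) := by
  have hmono : Monotone fun n : ℕ => (harmonic n : ℝ) - log n - 1 / (2 * n) := by
    refine monotone_nat_of_le_succ fun m => ?_
    rcases Nat.eq_zero_or_pos m with rfl | hm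
    · norm_num
    have hm : (0 : ℝ) < m := by exact_mod_cast hm
    have hlog : log ((m + 1 : ℕ) : ℝ) = log m + log (1 + (m : ℝ)⁻¹) := by
      rw [← log_mul hm.ne' (by positivity)]
      congr 1
      field_simp
      push_cast
      ring
    have h := log_one_add_inv_le hm
    have e1 : 1 / (2 * (m : ℝ)) = (m : ℝ)⁻¹ / 2 := by ring
    have e2 : 1 / (2 * ((m + 1 : ℕ) : ℝ)) = ((m + 1 : ℕ) : ℝ)⁻¹ / 2 := by ring
    simp only [harmonic_succ, Rat.cast_add, Rat.cast_inv, Rat.cast_natCast, hlog, e1, e2]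
    push_cast at h ⊢
    linarith
  have hle : ∀ m ≥ n, (harmonic n : ℝ) - log n - 1 / (2 * n) ≤ harmonic m - log m :=
    fun m hm => by
      have h := hmono hm
      have : (0 : ℝ) ≤ 1 / (2 * m) := by positivity
      dsimp only at h
      linarith
  linarith [ge_of_tendsto tendsto_harmonic_sub_log (eventually_atTop.2 ⟨n, hle⟩)]

theorem g_succ (n : ℕ) : g (n + 1) = (n + 1) * (harmonic n - eulerMascheroniConstant) := by
  rw [g, psi, harmonic_eq_sum_Icc]
  push_cast
  simp only [one_div]
  ring

theorem g_succ_succ (n : ℕ) :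
    g (n + 2) = g (n + 1) + 1 + (harmonic (n + 1) - eulerMascheroniConstant) := by
  rw [g_succ, g_succ, harmonic_succ]
  push_cast
  field_simp
  ring

theorem g_le_mul_log_sub_half {y : ℕ} (hy : 1 ≤ y) : g y ≤ y * log y - 1 / 2 := by
  obtain ⟨n, rfl⟩ := Nat.exists_eq_add_of_le' hy
  have h := harmonic_le_log_add_eulerMascheroniConstant_add_one_div_two_mul (n + 1)
  rw [harmonic_succ] at h
  rw [g_succ]
  push_cast at h ⊢
  field_simp at h
  linarith

theorem Gamma_nat_add_half_eq_factorial (n : ℕ) :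
    Gamma (n + 1 / 2) = √π * (2 * n).factorial / (4 ^ n * n.factorial) := by
  have h : (2 * n).factorial = 2 ^ n * n.factorial * (2 * n - 1)‼ := by
    rcases n with _ | n
    · rfl
    rw [← Nat.doubleFactorial_two_mul, show 2 * (n + 1) = 2 * n + 1 + 1 by ring,
      Nat.factorial_eq_mul_doubleFactorial, Nat.add_sub_cancel]
  rw [Real.Gamma_nat_add_half, h, show (4 : ℝ) ^ n = 2 ^ n * 2 ^ n by rw [← mul_pow]; norm_num]
  push_cast
  field_simp

theorem factorial_eq_stirlingSeq_mul {n : ℕ} (hn : n ≠ 0) :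
    (n.factorial : ℝ) = Stirling.stirlingSeq n * (√(2 * n) * (n / exp 1) ^ n) := by
  rw [Stirling.stirlingSeq, div_mul_cancel₀]
  positivity

theorem stirlingSeq_pos {n : ℕ} (hn : n ≠ 0) : 0 < Stirling.stirlingSeq n := by
  obtain ⟨m, rfl⟩ := Nat.exists_eq_succ_of_ne_zero hn
  exact Stirling.stirlingSeq'_pos m

noncomputable def nbRatio (y : ℕ) : ℝ := exp (g y - y) * √π / Gamma (y + 1 / 2)

theorem nbRatio_pos (y : ℕ) : 0 < nbRatio y := by
  unfold nbRatio
  positivity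

theorem nbRatio_mul_NB (q : ℝ) (y : ℕ) :
    nbRatio y * NB q y = √(1 - q) * exp (g y) * (q / exp 1) ^ y / y.factorial := by
  rw [nbRatio, NB, Gamma_one_half_eq, div_pow, ← exp_nat_mul, mul_one, exp_sub]
  field_simp

theorem nbRatio_one : nbRatio 1 = 2 / exp (1 + eulerMascheroniConstant) := by
  have hΓ : Gamma (1 + 1 / 2) = √π / 2 := by
    rw [add_comm, Gamma_add_one (by norm_num), Gamma_one_half_eq]
    ring
  have hg : g 1 = -eulerMascheroniConstant := by simp [g, psi]
  rw [nbRatio, Nat.cast_one, hΓ, hg, ← neg_add', add_comm, exp_neg]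
  field_simp

theorem nbRatio_succ_succ (n : ℕ) :
    nbRatio (n + 2) =
      nbRatio (n + 1) * (exp (harmonic (n + 1) - eulerMascheroniConstant) / (n + 3 / 2)) := by
  have hΓ : Gamma ((n + 2 : ℕ) + 1 / 2) = (n + 3 / 2) * Gamma ((n + 1 : ℕ) + 1 / 2) := by
    rw [show ((n + 2 : ℕ) : ℝ) + 1 / 2 = (n + 3 / 2) + 1 by push_cast; ring,
      Gamma_add_one (by positivity)]
    push_cast
    ring_nf
  rw [nbRatio, nbRatio, hΓ, g_succ_succ]
  rw [show g (n + 1) + 1 + (harmonic (n + 1) - eulerMascheroniConstant) - ((n + 2 : ℕ) : ℝ) =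
    g (n + 1) - (n + 1 : ℕ) + (harmonic (n + 1) - eulerMascheroniConstant) by push_cast; ring,
    exp_add]
  field_simp

theorem monotoneOn_nbRatio : MonotoneOn nbRatio (Set.Ici 1) := by
  refine monotoneOn_nat_Ici_of_le_succ fun y hy => ?_
  obtain ⟨n, rfl⟩ := Nat.exists_eq_add_of_le' hy
  rw [nbRatio_succ_succ]
  refine le_mul_of_one_le_right (nbRatio_pos _).le ((one_le_div (by positivity)).2 ?_)
  have h := log_add_half_add_eulerMascheroniConstant_le_harmonic (n + 1)
  calc (n : ℝ) + 3 / 2 = exp (log ((n + 1 : ℕ) + 1 / 2)) := by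
        rw [exp_log (by positivity)]; push_cast; ring
    _ ≤ _ := exp_le_exp.2 (by linarith)

theorem nbRatio_eq_stirlingSeq {y : ℕ} (hy : y ≠ 0) :
    nbRatio y = exp (g y) / (√2 * y ^ y) *
      (Stirling.stirlingSeq y / Stirling.stirlingSeq (2 * y)) := by
  have hs := stirlingSeq_pos hy
  have hs2 := stirlingSeq_pos (show 2 * y ≠ 0 by omega)
  have hsqrt : √(2 * ((2 * y : ℕ) : ℝ)) = √2 * √(2 * y) := by
    rw [← sqrt_mul zero_le_two]
    push_cast
    ring_nf
  rw [nbRatio, Gamma_nat_add_half_eq_factorial, factorial_eq_stirlingSeq_mul hy,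
    factorial_eq_stirlingSeq_mul (show 2 * y ≠ 0 by omega), hsqrt, exp_sub, ← exp_one_pow,
    div_pow, div_pow, show (4 : ℝ) ^ y = 2 ^ y * 2 ^ y by rw [← mul_pow]; norm_num]
  push_cast
  field_simp
  ring

theorem nbRatio_le_stirlingSeq_div {y : ℕ} (hy : 1 ≤ y) :
    nbRatio y ≤ exp (-(1 / 2)) / √2 *
      (Stirling.stirlingSeq y / Stirling.stirlingSeq (2 * y)) := by
  have hs : 0 ≤ Stirling.stirlingSeq y / Stirling.stirlingSeq (2 * y) := by
    unfold Stirling.stirlingSeq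
    positivity
  rw [nbRatio_eq_stirlingSeq (by omega)]
  refine mul_le_mul_of_nonneg_right ?_ hs
  calc exp (g y) / (√2 * y ^ y) ≤ exp (y * log y - 1 / 2) / (√2 * y ^ y) := by
        gcongr
        exact g_le_mul_log_sub_half hy
    _ = exp (-(1 / 2)) / √2 := by
        rw [sub_eq_add_neg, exp_add, ← log_pow, exp_log (by positivity)]
        field_simp

theorem tendsto_stirlingSeq_div_stirlingSeq_two_mul :
    Tendsto (fun n => Stirling.stirlingSeq n / Stirling.stirlingSeq (2 * n)) atTop (𝓝 1) := by
  have h := Stirling.tendsto_stirlingSeq_sqrt_pi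
  have h2 := h.comp (tendsto_atTop_mono (fun n => Nat.le_mul_of_pos_left n two_pos) tendsto_id)
  have h3 := h.div h2 (sqrt_pos.2 pi_pos).ne'
  rwa [div_self (sqrt_pos.2 pi_pos).ne'] at h3

theorem two_div_exp_le_nbRatio {y : ℕ} (hy : 1 ≤ y) :
    2 / exp (1 + eulerMascheroniConstant) ≤ nbRatio y :=
  nbRatio_one ▸ monotoneOn_nbRatio Set.self_mem_Ici hy hy

theorem nbRatio_le_one_div_sqrt {y : ℕ} (hy : 1 ≤ y) : nbRatio y ≤ 1 / √(2 * exp 1) := by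
  have hlim := tendsto_stirlingSeq_div_stirlingSeq_two_mul.const_mul (exp (-(1 / 2)) / √2)
  have hle := ge_of_tendsto hlim (eventually_atTop.2 ⟨y, fun n hn =>
    (monotoneOn_nbRatio hy (hy.trans hn) hn).trans (nbRatio_le_stirlingSeq_div (hy.trans hn))⟩)
  calc nbRatio y ≤ exp (-(1 / 2)) / √2 * 1 := hle
    _ = 1 / √(2 * exp 1) := by
      rw [sqrt_mul zero_le_two, ← exp_half, exp_neg]
      field_simp

/-- For every integer `y ≥ 1` and every `q ∈ (0,1)`,
`(2/e^{1+γ})·NB_{1/2,q}(y) ≤ √(1−q)·e^{g(y)}·(q/e)^y / y! ≤ (1/√(2e))·NB_{1/2,q}(y)`. -/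
theorem stmt5 (y : ℕ) (hy : 1 ≤ y) (q : ℝ) (hq : q ∈ Set.Ioo (0 : ℝ) 1) :
    (2 / Real.exp (1 + Real.eulerMascheroniConstant)) * NB q y ≤
        Real.sqrt (1 - q) * Real.exp (g y) * (q / Real.exp 1) ^ y / Nat.factorial y ∧
      Real.sqrt (1 - q) * Real.exp (g y) * (q / Real.exp 1) ^ y / Nat.factorial y ≤
        (1 / Real.sqrt (2 * Real.exp 1)) * NB q y := by
  have hNB : 0 ≤ NB q y := by
    have := hq.1.le
    unfold NB
    positivity
  rw [← nbRatio_mul_NB]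
  exact ⟨mul_le_mul_of_nonneg_right (two_div_exp_le_nbRatio hy) hNB,
    mul_le_mul_of_nonneg_right (nbRatio_le_one_div_sqrt hy) hNB⟩
end
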